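/- arXiv:2412.20237 — 5 statements merged into one kernel-verified Lean document; each statement's English description precedes it below -/
import Mathlib

section
/- Fix a nonempty closed set S ⊆ ℝ^n, a constant κ ≥ 0, and points ξ̂_1,…,ξ̂_N ∈ ℝ^n. Then the supremum, over all Borel probability measures μ on ℝ^n with finite first moment (∫‖ξ‖ dμ < ∞), of the penalized quantity μ(S) − κ·d_W(μ, P̂_N) equals (1/N)·∑_{i=1}^N max(1 − κ·infDist(ξ̂_i, S), 0). -/
/-!
Weak duality: with `f = max (1 - κ · infDist(·, S)) 0`, every `ξ, ξ'` satisfy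
`1_S(ξ) ≤ f(ξ') + κ‖ξ - ξ'‖`; integrating against any coupling of `μ` and `P̂_N` gives
`μ(S) - κ·d_W(μ, P̂_N) ≤ ∫ f dP̂_N`. The bound is attained by moving each `ξ̂ᵢ` with
`1 - κ·infDist(ξ̂ᵢ, S) > 0` to a nearest point of `S` and leaving the others in place.
-/

open Matrix MeasureTheory Metric
open scoped ENNReal

/-- The empirical distribution `P̂_N = (1/N) ∑ δ_{ξ̂ᵢ}` on `ℝ^n`. -/
noncomputable def empirical {n N : ℕ} (ξhat : Fin N → EuclideanSpace ℝ (Fin n)) :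
    Measure (EuclideanSpace ℝ (Fin n)) :=
  (N : ℝ≥0∞)⁻¹ • ∑ i : Fin N, Measure.dirac (ξhat i)

/-- Type-1 Wasserstein distance: infimum over couplings of the expected distance. -/
noncomputable def wassersteinDist {n : ℕ} (μ ν : Measure (EuclideanSpace ℝ (Fin n))) : ℝ :=
  sInf { c : ℝ | ∃ Q : Measure (EuclideanSpace ℝ (Fin n) × EuclideanSpace ℝ (Fin n)),
    IsProbabilityMeasure Q ∧ Q.map Prod.fst = μ ∧ Q.map Prod.snd = ν ∧
    Integrable (fun p => ‖p.1 - p.2‖) Q ∧ c = ∫ p, ‖p.1 - p.2‖ ∂Q }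

open Set

section Empirical

variable {α : Type*} [MeasurableSpace α] {N : ℕ}

theorem isProbabilityMeasure_inv_smul_sum_dirac (hN : 0 < N) (g : Fin N → α) :
    IsProbabilityMeasure ((N : ℝ≥0∞)⁻¹ • ∑ i, Measure.dirac (g i)) := by
  constructor
  simp [ENNReal.inv_mul_cancel (Nat.cast_ne_zero.2 hN.ne')]

theorem map_inv_smul_sum_dirac {β : Type*} [MeasurableSpace β] {f : α → β} (hf : Measurable f)
    (g : Fin N → α) :
    ((N : ℝ≥0∞)⁻¹ • ∑ i, Measure.dirac (g i)).map f =
      (N : ℝ≥0∞)⁻¹ • ∑ i, Measure.dirac (f (g i)) := by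
  simp [Measure.map_smul, Measure.map_finset_sum hf.aemeasurable, Measure.map_dirac' hf]

variable [MeasurableSingletonClass α]

theorem integrable_inv_smul_sum_dirac (hN : 0 < N) (g : Fin N → α) (f : α → ℝ) :
    Integrable f ((N : ℝ≥0∞)⁻¹ • ∑ i, Measure.dirac (g i)) :=
  (integrable_finsetSum_measure.2 fun _ _ => integrable_dirac enorm_lt_top).smul_measure
    (ENNReal.inv_ne_top.2 (Nat.cast_ne_zero.2 hN.ne'))

theorem integral_inv_smul_sum_dirac (g : Fin N → α) (f : α → ℝ) :
    ∫ x, f x ∂((N : ℝ≥0∞)⁻¹ • ∑ i, Measure.dirac (g i)) = (N : ℝ)⁻¹ * ∑ i, f (g i) := by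
  rw [integral_smul_measure,
    integral_finsetSum_measure fun _ _ => integrable_dirac enorm_lt_top]
  simp [integral_dirac]

end Empirical

/-- The smallest nonnegative `κ`-Lipschitz function above the indicator of `S`. -/
noncomputable def lipschitzIndicator {α : Type*} [PseudoMetricSpace α] (κ : ℝ) (S : Set α)
    (x : α) : ℝ :=
  max (1 - κ * infDist x S) 0

section LipschitzIndicator

variable {α : Type*} [PseudoMetricSpace α] {κ : ℝ} {S : Set α}

theorem lipschitzIndicator_nonneg (x : α) : 0 ≤ lipschitzIndicator κ S x :=
  le_max_right _ _

theorem lipschitzIndicator_le_one (hκ : 0 ≤ κ) (x : α) : lipschitzIndicator κ S x ≤ 1 :=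
  max_le (by nlinarith [infDist_nonneg (x := x) (s := S)]) zero_le_one

theorem continuous_lipschitzIndicator : Continuous (lipschitzIndicator (α := α) κ S) :=
  (continuous_const.sub (continuous_const.mul (continuous_infDist_pt S))).max continuous_const

theorem indicator_le_lipschitzIndicator_add (hκ : 0 ≤ κ) (x y : α) :
    S.indicator 1 x ≤ lipschitzIndicator κ S y + κ * dist x y := by
  by_cases hx : x ∈ S
  · have hd : infDist y S ≤ dist x y := dist_comm x y ▸ infDist_le_dist_of_mem hx
    rw [indicator_of_mem hx, Pi.one_apply]
    calc (1 : ℝ) ≤ 1 - κ * infDist y S + κ * dist x y := by nlinarith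
      _ ≤ lipschitzIndicator κ S y + κ * dist x y := by gcongr; exact le_max_left _ _
  · rw [indicator_of_notMem hx]
    exact add_nonneg (lipschitzIndicator_nonneg y) (mul_nonneg hκ dist_nonneg)

theorem exists_lipschitzIndicator_le [ProperSpace α] (hS : IsClosed S) (hSne : S.Nonempty)
    (y : α) : ∃ x, lipschitzIndicator κ S y ≤ S.indicator 1 x - κ * dist x y := by
  by_cases hpos : 0 < 1 - κ * infDist y S
  · obtain ⟨x, hxS, hxd⟩ := hS.exists_infDist_eq_dist hSne y
    refine ⟨x, ?_⟩
    rw [lipschitzIndicator, max_eq_left hpos.le, indicator_of_mem hxS, Pi.one_apply, dist_comm, hxd]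
  · refine ⟨y, ?_⟩
    rw [lipschitzIndicator, max_eq_right (not_lt.1 hpos), dist_self, mul_zero, sub_zero]
    exact indicator_nonneg (fun _ _ => zero_le_one) y

end LipschitzIndicator

section Coupling

variable {E : Type*} [NormedAddCommGroup E] [MeasurableSpace E] {μ ν : Measure E}

theorem measureReal_le_integral_lipschitzIndicator_add [OpensMeasurableSpace E]
    {Q : Measure (E × E)} [IsFiniteMeasure Q] {κ : ℝ} {S : Set E}
    (hfst : Q.map Prod.fst = μ) (hsnd : Q.map Prod.snd = ν)
    (hQ : Integrable (fun p => ‖p.1 - p.2‖) Q) (hS : IsClosed S) (hκ : 0 ≤ κ) :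
    μ.real S ≤ ∫ x, lipschitzIndicator κ S x ∂ν + κ * ∫ p, ‖p.1 - p.2‖ ∂Q := by
  have hind : Measurable (S.indicator (1 : E → ℝ)) := measurable_const.indicator hS.measurableSet
  have hlip : Measurable (lipschitzIndicator κ S) := continuous_lipschitzIndicator.measurable
  have hlipQ : Integrable (fun p : E × E => lipschitzIndicator κ S p.2) Q :=
    .of_bound (hlip.comp measurable_snd).aestronglyMeasurable 1 <| .of_forall fun p => by
      rw [Real.norm_of_nonneg (lipschitzIndicator_nonneg _)]
      exact lipschitzIndicator_le_one hκ _
  have hindQ : Integrable (fun p : E × E => S.indicator 1 p.1) Q :=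
    .of_bound (hind.comp measurable_fst).aestronglyMeasurable 1 <| .of_forall fun p =>
      norm_indicator_le_norm_self _ _ |>.trans (by simp)
  calc μ.real S = ∫ p, S.indicator 1 p.1 ∂Q := by
        rw [← integral_indicator_one hS.measurableSet, ← hfst,
          integral_map measurable_fst.aemeasurable hind.aestronglyMeasurable]
    _ ≤ ∫ p, (lipschitzIndicator κ S p.2 + κ * ‖p.1 - p.2‖) ∂Q :=
        integral_mono hindQ (hlipQ.add (hQ.const_mul κ)) fun p => by
          simpa only [dist_eq_norm] using indicator_le_lipschitzIndicator_add hκ p.1 p.2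
    _ = ∫ x, lipschitzIndicator κ S x ∂ν + κ * ∫ p, ‖p.1 - p.2‖ ∂Q := by
        rw [integral_add hlipQ (hQ.const_mul κ), integral_const_mul, ← hsnd,
          integral_map measurable_snd.aemeasurable hlip.aestronglyMeasurable]

theorem integrable_norm_sub_prod [BorelSpace E] [SecondCountableTopology E]
    [IsFiniteMeasure μ] [IsFiniteMeasure ν]
    (hμ : Integrable (fun x => ‖x‖) μ) (hν : Integrable (fun x => ‖x‖) ν) :
    Integrable (fun p : E × E => ‖p.1 - p.2‖) (μ.prod ν) := by
  have hμ' : Integrable id μ := (integrable_norm_iff aestronglyMeasurable_id).1 hμ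
  have hν' : Integrable id ν := (integrable_norm_iff aestronglyMeasurable_id).1 hν
  exact ((hμ'.comp_fst ν).sub (hν'.comp_snd μ)).norm

end Coupling

section Wasserstein

variable {n : ℕ} {μ ν : Measure (EuclideanSpace ℝ (Fin n))}

theorem wassersteinDist_le_integral
    {Q : Measure (EuclideanSpace ℝ (Fin n) × EuclideanSpace ℝ (Fin n))} [IsProbabilityMeasure Q]
    (hfst : Q.map Prod.fst = μ) (hsnd : Q.map Prod.snd = ν)
    (hQ : Integrable (fun p => ‖p.1 - p.2‖) Q) :
    wassersteinDist μ ν ≤ ∫ p, ‖p.1 - p.2‖ ∂Q := by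
  refine csInf_le ⟨0, ?_⟩ ⟨Q, inferInstance, hfst, hsnd, hQ, rfl⟩
  rintro _ ⟨_, -, -, -, -, rfl⟩
  exact integral_nonneg fun p => norm_nonneg _

theorem le_mul_wassersteinDist [IsProbabilityMeasure μ] [IsProbabilityMeasure ν]
    (hμ : Integrable (fun x => ‖x‖) μ) (hν : Integrable (fun x => ‖x‖) ν) {a κ : ℝ} (hκ : 0 ≤ κ)
    (h : ∀ Q : Measure (EuclideanSpace ℝ (Fin n) × EuclideanSpace ℝ (Fin n)),
      IsProbabilityMeasure Q → Q.map Prod.fst = μ → Q.map Prod.snd = ν →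
      Integrable (fun p => ‖p.1 - p.2‖) Q → a ≤ κ * ∫ p, ‖p.1 - p.2‖ ∂Q) :
    a ≤ κ * wassersteinDist μ ν := by
  rw [wassersteinDist, ← smul_eq_mul, ← Real.sInf_smul_of_nonneg hκ]
  refine le_csInf (.smul_set ⟨_, μ.prod ν, inferInstance, by simp, by simp,
    integrable_norm_sub_prod hμ hν, rfl⟩) ?_
  rintro _ ⟨_, ⟨Q, hQ, hfst, hsnd, hint, rfl⟩, rfl⟩
  exact h Q hQ hfst hsnd hint

theorem measureReal_sub_mul_wassersteinDist_le [IsProbabilityMeasure μ] [IsProbabilityMeasure ν]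
    (hμ : Integrable (fun x => ‖x‖) μ) (hν : Integrable (fun x => ‖x‖) ν)
    {S : Set (EuclideanSpace ℝ (Fin n))} (hS : IsClosed S) {κ : ℝ} (hκ : 0 ≤ κ) :
    μ.real S - κ * wassersteinDist μ ν ≤ ∫ x, lipschitzIndicator κ S x ∂ν := by
  have := le_mul_wassersteinDist hμ hν hκ (a := μ.real S - ∫ x, lipschitzIndicator κ S x ∂ν)
    fun _ _ hfst hsnd hQ => by
      linarith [measureReal_le_integral_lipschitzIndicator_add hfst hsnd hQ hS hκ]
  linarith

theorem isProbabilityMeasure_empirical {N : ℕ} (hN : 0 < N)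
    (ξhat : Fin N → EuclideanSpace ℝ (Fin n)) : IsProbabilityMeasure (empirical ξhat) :=
  isProbabilityMeasure_inv_smul_sum_dirac hN ξhat

theorem integrable_empirical {N : ℕ} (hN : 0 < N) (ξhat : Fin N → EuclideanSpace ℝ (Fin n))
    (f : EuclideanSpace ℝ (Fin n) → ℝ) : Integrable f (empirical ξhat) :=
  integrable_inv_smul_sum_dirac hN ξhat f

theorem integral_empirical {N : ℕ} (ξhat : Fin N → EuclideanSpace ℝ (Fin n))
    (f : EuclideanSpace ℝ (Fin n) → ℝ) :
    ∫ x, f x ∂empirical ξhat = (N : ℝ)⁻¹ * ∑ i, f (ξhat i) :=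
  integral_inv_smul_sum_dirac ξhat f

theorem exists_le_measureReal_sub_mul_wassersteinDist {N : ℕ} (hN : 0 < N)
    {S : Set (EuclideanSpace ℝ (Fin n))} (hS : IsClosed S) (hSne : S.Nonempty)
    {κ : ℝ} (hκ : 0 ≤ κ) (ξhat : Fin N → EuclideanSpace ℝ (Fin n)) :
    ∃ μ : Measure (EuclideanSpace ℝ (Fin n)), IsProbabilityMeasure μ ∧
      Integrable (fun x => ‖x‖) μ ∧
      (N : ℝ)⁻¹ * ∑ i, lipschitzIndicator κ S (ξhat i)
        ≤ μ.real S - κ * wassersteinDist μ (empirical ξhat) := by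
  choose η hη using fun i => exists_lipschitzIndicator_le (κ := κ) hS hSne (ξhat i)
  let Q := (N : ℝ≥0∞)⁻¹ • ∑ i, Measure.dirac (η i, ξhat i)
  have := isProbabilityMeasure_inv_smul_sum_dirac hN fun i => (η i, ξhat i)
  have hW : wassersteinDist (empirical η) (empirical ξhat) ≤ ∫ p, ‖p.1 - p.2‖ ∂Q :=
    wassersteinDist_le_integral (map_inv_smul_sum_dirac measurable_fst _)
      (map_inv_smul_sum_dirac measurable_snd _) (integrable_inv_smul_sum_dirac hN _ _)
  have hS' : (empirical η).real S = (N : ℝ)⁻¹ * ∑ i, S.indicator 1 (η i) := by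
    rw [← integral_indicator_one hS.measurableSet, integral_empirical]
  refine ⟨empirical η, isProbabilityMeasure_empirical hN η, integrable_empirical hN η _, ?_⟩
  rw [integral_inv_smul_sum_dirac] at hW
  calc (N : ℝ)⁻¹ * ∑ i, lipschitzIndicator κ S (ξhat i)
      ≤ (N : ℝ)⁻¹ * ∑ i, (S.indicator 1 (η i) - κ * ‖η i - ξhat i‖) := by
        gcongr with i; simpa only [dist_eq_norm] using hη i
    _ = (empirical η).real S - κ * ((N : ℝ)⁻¹ * ∑ i, ‖η i - ξhat i‖) := by
        rw [hS', Finset.sum_sub_distrib, ← Finset.mul_sum]; ring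
    _ ≤ (empirical η).real S - κ * wassersteinDist (empirical η) (empirical ξhat) := by
        gcongr

end Wasserstein

/-- Lemma 1 of the paper (with the finite LP solved in closed form): the supremum over
probability measures with finite first moment of the Wasserstein-penalized probability of a
nonempty closed set `S` equals `(1/N) ∑ᵢ max(1 - κ·infDist(ξ̂ᵢ, S), 0)`. -/
theorem penalized_sup_eq {n N : ℕ} (hN : 0 < N)
    (S : Set (EuclideanSpace ℝ (Fin n))) (hS : IsClosed S) (hSne : S.Nonempty)
    (κ : ℝ) (hκ : 0 ≤ κ) (ξhat : Fin N → EuclideanSpace ℝ (Fin n)) :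
    sSup { r : ℝ | ∃ μ : Measure (EuclideanSpace ℝ (Fin n)),
        IsProbabilityMeasure μ ∧ Integrable (fun ξ => ‖ξ‖) μ ∧
        r = (μ S).toReal - κ * wassersteinDist μ (empirical ξhat) }
      = (1 / N : ℝ) * ∑ i : Fin N, max (1 - κ * infDist (ξhat i) S) 0 := by
  have := isProbabilityMeasure_empirical hN ξhat
  have hub : ∀ μ : Measure (EuclideanSpace ℝ (Fin n)), IsProbabilityMeasure μ →
      Integrable (fun ξ => ‖ξ‖) μ →
      (μ S).toReal - κ * wassersteinDist μ (empirical ξhat)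
        ≤ (N : ℝ)⁻¹ * ∑ i, lipschitzIndicator κ S (ξhat i) := fun μ _ hμ =>
    integral_empirical ξhat _ ▸ measureReal_sub_mul_wassersteinDist_le hμ
      (integrable_empirical hN ξhat _) hS hκ
  obtain ⟨μ₀, hμ₀, hμ₀int, hle⟩ :=
    exists_le_measureReal_sub_mul_wassersteinDist hN hS hSne hκ ξhat
  rw [one_div]
  refine le_antisymm (csSup_le ⟨_, μ₀, hμ₀, hμ₀int, rfl⟩ ?_)
    (le_csSup_of_le ⟨(N : ℝ)⁻¹ * ∑ i, lipschitzIndicator κ S (ξhat i), ?_⟩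
      ⟨μ₀, hμ₀, hμ₀int, rfl⟩ hle)
  all_goals rintro _ ⟨μ, hμ, hμint, rfl⟩; exact hub μ hμ hμint
end

section
/- Fix a nonempty closed set S ⊆ ℝ^n, a constant κ ≥ 0, and points ξ̂_1,…,ξ̂_N ∈ ℝ^n. Consider all Borel probability measures Q on ℝ^n × ℝ^n whose second marginal equals the empirical distribution P̂_N and for which the map (ξ,ξ′) ↦ ‖ξ−ξ′‖ is Q-integrable. Then the supremum over all such Q of ∫ (1_S(ξ) − κ·‖ξ−ξ′‖) dQ(ξ,ξ′) equals (1/N)·∑_{i=1}^N sup_{ξ∈ℝ^n} (1_S(ξ) − κ·‖ξ−ξ̂_i‖). -/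
open Matrix MeasureTheory Metric
open scoped ENNReal

/-!
The supremum of `ξ ↦ 1_S(ξ) - κ‖ξ - ξ'‖` is `max (1 - κ d(ξ', S)) 0`, attained at a point of `S`
nearest to `ξ'` or at `ξ'` itself. Hence the integrand of any admissible coupling `Q` is bounded by
a function of the second coordinate alone, whose `Q`-integral only depends on the marginal `P̂_N`;
and the coupling that moves each `ξ̂ᵢ` to a maximiser attains this bound.
-/

section PointwiseSup

variable {E : Type*} [NormedAddCommGroup E] {S : Set E} {κ : ℝ}

lemma indicator_sub_mul_norm_le_max (hκ : 0 ≤ κ) (ξ ξ' : E) :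
    S.indicator (fun _ => (1 : ℝ)) ξ - κ * ‖ξ - ξ'‖ ≤ max (1 - κ * infDist ξ' S) 0 := by
  by_cases hξ : ξ ∈ S
  · have hdist : infDist ξ' S ≤ ‖ξ - ξ'‖ := by
      simpa [dist_eq_norm, norm_sub_rev] using infDist_le_dist_of_mem (x := ξ') hξ
    rw [Set.indicator_of_mem hξ]
    exact le_max_of_le_left (by nlinarith)
  · rw [Set.indicator_of_notMem hξ]
    exact le_max_of_le_right (by nlinarith [norm_nonneg (ξ - ξ')])

lemma exists_indicator_sub_mul_norm_eq_max [ProperSpace E] (hS : IsClosed S) (hSne : S.Nonempty)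
    (ξ' : E) :
    ∃ ξ, S.indicator (fun _ => (1 : ℝ)) ξ - κ * ‖ξ - ξ'‖ = max (1 - κ * infDist ξ' S) 0 := by
  rcases le_or_gt 0 (1 - κ * infDist ξ' S) with h | h
  · obtain ⟨y, hyS, hy⟩ := hS.exists_infDist_eq_dist hSne ξ'
    refine ⟨y, ?_⟩
    rw [Set.indicator_of_mem hyS, max_eq_left h, hy, dist_eq_norm, norm_sub_rev]
  · have hξ' : ξ' ∉ S := fun hmem => by
      rw [infDist_zero_of_mem hmem, mul_zero] at h
      linarith
    refine ⟨ξ', ?_⟩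
    rw [Set.indicator_of_notMem hξ', max_eq_right h.le, sub_self, norm_zero, mul_zero, sub_zero]

lemma ciSup_indicator_sub_mul_norm [ProperSpace E] (hS : IsClosed S) (hSne : S.Nonempty)
    (hκ : 0 ≤ κ) (ξ' : E) :
    ⨆ ξ, (S.indicator (fun _ => (1 : ℝ)) ξ - κ * ‖ξ - ξ'‖) = max (1 - κ * infDist ξ' S) 0 := by
  obtain ⟨ξ₀, hξ₀⟩ := exists_indicator_sub_mul_norm_eq_max (κ := κ) hS hSne ξ'
  have hbdd : BddAbove (Set.range fun ξ => S.indicator (fun _ => (1 : ℝ)) ξ - κ * ‖ξ - ξ'‖) :=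
    ⟨_, Set.forall_mem_range.2 fun ξ => indicator_sub_mul_norm_le_max hκ ξ ξ'⟩
  exact le_antisymm (ciSup_le fun ξ => indicator_sub_mul_norm_le_max hκ ξ ξ')
    (hξ₀ ▸ le_ciSup hbdd ξ₀)

end PointwiseSup

section EmpiricalMeasure

variable {α β : Type*} [MeasurableSpace α] [MeasurableSpace β] {N : ℕ}

noncomputable def empiricalMeasure (x : Fin N → α) : Measure α :=
  (N : ℝ≥0∞)⁻¹ • ∑ i, Measure.dirac (x i)

lemma isProbabilityMeasure_empiricalMeasure (hN : 0 < N) (x : Fin N → α) :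
    IsProbabilityMeasure (empiricalMeasure x) := by
  have hN' : (N : ℝ≥0∞) ≠ 0 := by exact_mod_cast hN.ne'
  constructor
  simp [empiricalMeasure, Measure.finsetSum_apply, ENNReal.inv_mul_cancel hN']

lemma map_empiricalMeasure {f : α → β} (hf : Measurable f) (x : Fin N → α) :
    (empiricalMeasure x).map f = empiricalMeasure (f ∘ x) := by
  simp only [empiricalMeasure, Measure.map_smul, Measure.map_finset_sum' hf.aemeasurable,
    Measure.map_dirac' hf, Function.comp_apply]

variable [MeasurableSingletonClass α]

lemma integrable_empiricalMeasure (g : α → ℝ) (x : Fin N → α) :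
    Integrable g (empiricalMeasure x) := by
  rcases N.eq_zero_or_pos with rfl | hN
  · simp [empiricalMeasure]
  exact (integrable_finsetSum_measure.2 fun i _ => integrable_dirac enorm_lt_top).smul_measure
    (ENNReal.inv_ne_top.2 (by exact_mod_cast hN.ne'))

lemma integral_empiricalMeasure (g : α → ℝ) (x : Fin N → α) :
    ∫ a, g a ∂empiricalMeasure x = (1 / N : ℝ) * ∑ i, g (x i) := by
  rw [empiricalMeasure, integral_smul_measure,
    integral_finsetSum_measure fun i _ => integrable_dirac enorm_lt_top]
  simp [integral_dirac]

end EmpiricalMeasure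

lemma integral_le_integral_map_snd {α β : Type*} [MeasurableSpace α] [MeasurableSpace β]
    {Q : Measure (α × β)} {f : α × β → ℝ} {g : β → ℝ} (hf : Integrable f Q)
    (hg : Integrable g (Q.map Prod.snd)) (hfg : ∀ p, f p ≤ g p.2) :
    ∫ p, f p ∂Q ≤ ∫ y, g y ∂(Q.map Prod.snd) := by
  rw [integral_map measurable_snd.aemeasurable hg.aestronglyMeasurable]
  exact integral_mono hf (hg.comp_measurable measurable_snd) hfg

lemma integrable_indicator_fst_sub_mul_norm {E : Type*} [NormedAddCommGroup E] [MeasurableSpace E]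
    {Q : Measure (E × E)} [IsFiniteMeasure Q] {S : Set E} (hS : MeasurableSet S) (κ : ℝ)
    (hQ : Integrable (fun p => ‖p.1 - p.2‖) Q) :
    Integrable (fun p => S.indicator (fun _ => (1 : ℝ)) p.1 - κ * ‖p.1 - p.2‖) Q :=
  (((integrable_const 1).indicator hS).comp_measurable measurable_fst).sub (hQ.const_mul κ)

/-- Marginal-decomposition step in the proof of Lemma 1 of the paper: the supremum over
probability measures `Q` on `ℝ^n × ℝ^n` with second marginal `P̂_N` (and integrable distance)
of `∫ (1_S(ξ) - κ‖ξ - ξ'‖) dQ` equals `(1/N) ∑ᵢ sup_ξ (1_S(ξ) - κ‖ξ - ξ̂ᵢ‖)`. -/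
theorem coupling_sup_eq_sum_pointwise_sup {n N : ℕ} (hN : 0 < N)
    (S : Set (EuclideanSpace ℝ (Fin n))) (hS : IsClosed S) (hSne : S.Nonempty)
    (κ : ℝ) (hκ : 0 ≤ κ) (ξhat : Fin N → EuclideanSpace ℝ (Fin n)) :
    sSup { r : ℝ | ∃ Q : Measure (EuclideanSpace ℝ (Fin n) × EuclideanSpace ℝ (Fin n)),
        IsProbabilityMeasure Q ∧ Q.map Prod.snd = empirical ξhat ∧
        Integrable (fun p => ‖p.1 - p.2‖) Q ∧
        r = ∫ p, (S.indicator (fun _ => (1 : ℝ)) p.1 - κ * ‖p.1 - p.2‖) ∂Q }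
      = (1 / N : ℝ) * ∑ i : Fin N,
          ⨆ ξ : EuclideanSpace ℝ (Fin n),
            (S.indicator (fun _ => (1 : ℝ)) ξ - κ * ‖ξ - ξhat i‖) := by
  have hempirical : empirical ξhat = empiricalMeasure ξhat := rfl
  simp only [ciSup_indicator_sub_mul_norm hS hSne hκ, hempirical]
  choose ξstar hξstar using fun i => exists_indicator_sub_mul_norm_eq_max (κ := κ) hS hSne (ξhat i)
  refine IsGreatest.csSup_eq ⟨⟨empiricalMeasure fun i => (ξstar i, ξhat i),
    isProbabilityMeasure_empiricalMeasure hN _, map_empiricalMeasure measurable_snd _,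
    integrable_empiricalMeasure _ _, ?_⟩, ?_⟩
  · simp only [integral_empiricalMeasure, hξstar]
  · rintro _ ⟨Q, hQ, hmarginal, hQint, rfl⟩
    calc _ ≤ ∫ ξ', max (1 - κ * infDist ξ' S) 0 ∂(Q.map Prod.snd) :=
          integral_le_integral_map_snd (integrable_indicator_fst_sub_mul_norm hS.measurableSet κ hQint)
            (hmarginal ▸ integrable_empiricalMeasure _ _)
            fun p => indicator_sub_mul_norm_le_max hκ p.1 p.2
      _ = _ := by rw [hmarginal, integral_empiricalMeasure]
end

section
/- Let P̄ be an n×n real positive semidefinite matrix, V an n×m real matrix, f̄ ∈ ℝ^m, and ξ̂ ∈ ℝ^n, and let S = {ξ ∈ ℝ^n : (ξ+Vf̄)ᵀ P̄ (ξ+Vf̄) ≤ 1} (which is nonempty since it contains −Vf̄). Then infDist(ξ̂, S) equals the supremum of u over all triples (π, p, u) ∈ ℝ_{≥0} × ℝ × ℝ satisfying the two matrix inequalities: (i) the (n+1)×(n+1) block matrix [[I, −ξ̂],[−ξ̂ᵀ, ξ̂ᵀξ̂ − p]] + π·[[P̄, P̄Vf̄],[f̄ᵀVᵀP̄, f̄ᵀVᵀP̄Vf̄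 − 1]] is positive semidefinite, and (ii) the 2×2 matrix [[p, u],[u, 1]] is positive semidefinite; moreover this supremum is attained. -/
open Matrix Metric

/-- View a point of `ℝ^n` (with Euclidean norm) as a plain vector `Fin n → ℝ`. -/
def toVec {n : ℕ} (ξ : EuclideanSpace ℝ (Fin n)) : Fin n → ℝ := ξ

/-- The symmetric homogenization `[[A, b],[bᵀ, c]]` of a quadratic function. -/
def homMat {n : ℕ} (A : Matrix (Fin n) (Fin n) ℝ) (b : Fin n → ℝ) (c : ℝ) :
    Matrix (Fin n ⊕ Fin 1) (Fin n ⊕ Fin 1) ℝ :=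
  Matrix.fromBlocks A (Matrix.replicateCol (Fin 1) b) (Matrix.replicateRow (Fin 1) b) (Matrix.of fun _ _ => c)

/-! The LMI (i) is the homogenization of "the Lagrangian
`‖x - ξ̂‖² - p + π ((x + V f̄)ᵀ P̄ (x + V f̄) - 1)` is nonnegative for every `x`", and (ii) says
`u² ≤ p`. Weak duality then bounds `u` by the distance from `ξ̂` to every point of `S`.
Conversely, since `P̄ ⪰ 0` the problem of minimizing `‖x - ξ̂‖²` over `S` is convex with Slater
point `-V f̄`, so it has a Lagrange multiplier `π`, and `(π, d², d)` with `d = infDist ξ̂ S` is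
feasible. -/

namespace ConvexOn

variable {E : Type*} [AddCommGroup E] [Module ℝ E] {s : Set E} {f g : E → ℝ} {c : ℝ}

theorem sub_div_le_sub_div_neg (hf : ConvexOn ℝ s f) (hg : ConvexOn ℝ s g)
    (hc : ∀ x ∈ s, g x ≤ 0 → c ≤ f x) {x₁ x₂ : E} (hx₁ : x₁ ∈ s) (hx₂ : x₂ ∈ s)
    (hg₁ : 0 < g x₁) (hg₂ : g x₂ < 0) :
    (c - f x₁) / g x₁ ≤ (f x₂ - c) / -g x₂ := by
  have hD : 0 < g x₁ - g x₂ := by linarith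
  set a := -g x₂ / (g x₁ - g x₂) with ha_def
  set b := g x₁ / (g x₁ - g x₂) with hb_def
  have ha : 0 ≤ a := div_nonneg (by linarith) hD.le
  have hb : 0 ≤ b := div_nonneg hg₁.le hD.le
  have hab : a + b = 1 := by rw [ha_def, hb_def]; field_simp; ring
  have hgx : g (a • x₁ + b • x₂) ≤ 0 :=
    calc g (a • x₁ + b • x₂) ≤ a * g x₁ + b * g x₂ := hg.2 hx₁ hx₂ ha hb hab
      _ = 0 := by rw [ha_def, hb_def]; field_simp; ring
  have hfx : c ≤ a * f x₁ + b * f x₂ :=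
    (hc _ (hf.1 hx₁ hx₂ ha hb hab) hgx).trans (hf.2 hx₁ hx₂ ha hb hab)
  have key : c * (g x₁ - g x₂) ≤ -g x₂ * f x₁ + g x₁ * f x₂ :=
    calc c * (g x₁ - g x₂) ≤ (a * f x₁ + b * f x₂) * (g x₁ - g x₂) :=
          mul_le_mul_of_nonneg_right hfx hD.le
      _ = -g x₂ * f x₁ + g x₁ * f x₂ := by rw [ha_def, hb_def]; field_simp
  rw [div_le_div_iff₀ hg₁ (neg_pos.2 hg₂)]
  linarith

/-- Every point with `g x > 0` forces `π ≥ (c - f x) / g x` and every point with `g x < 0` forces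
`π ≤ (f x - c) / -g x`; by `sub_div_le_sub_div_neg` these bounds are compatible, so their supremum
works. -/
theorem exists_lagrange_multiplier (hf : ConvexOn ℝ s f) (hg : ConvexOn ℝ s g)
    {x₀ : E} (hx₀ : x₀ ∈ s) (hg₀ : g x₀ < 0) (hc : ∀ x ∈ s, g x ≤ 0 → c ≤ f x) :
    ∃ π, 0 ≤ π ∧ ∀ x ∈ s, c ≤ f x + π * g x := by
  set A : Set ℝ := insert 0 ((fun x => (c - f x) / g x) '' {x | x ∈ s ∧ 0 < g x})
  have hA : ∀ x ∈ s, g x < 0 → ∀ r ∈ A, r ≤ (f x - c) / -g x := by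
    rintro x hx hgx r (rfl | ⟨y, ⟨hy, hgy⟩, rfl⟩)
    · exact div_nonneg (by linarith [hc x hx hgx.le]) (by linarith)
    · exact sub_div_le_sub_div_neg hf hg hc hy hx hgy hgx
  have hbdd : BddAbove A := ⟨_, hA x₀ hx₀ hg₀⟩
  refine ⟨sSup A, le_csSup hbdd (Set.mem_insert 0 _), fun x hx => ?_⟩
  rcases lt_trichotomy (g x) 0 with hgx | hgx | hgx
  · have := csSup_le ⟨0, Set.mem_insert 0 _⟩ (hA x hx hgx)
    rw [le_div_iff₀ (by linarith)] at this
    linarith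
  · simpa [hgx] using hc x hx hgx.le
  · have := le_csSup hbdd (Set.mem_insert_of_mem 0 ⟨x, ⟨hx, hgx⟩, rfl⟩)
    rw [div_le_iff₀ hgx] at this
    linarith

end ConvexOn

theorem Matrix.PosSemidef.convexOn_dotProduct_mulVec {ι : Type*} [Fintype ι]
    {P : Matrix ι ι ℝ} (hP : P.PosSemidef) : ConvexOn ℝ Set.univ fun x => x ⬝ᵥ P *ᵥ x := by
  refine ⟨convex_univ, fun x _ y _ a b ha hb hab => ?_⟩
  have hxy : 0 ≤ (x - y) ⬝ᵥ P *ᵥ (x - y) := by simpa using hP.dotProduct_mulVec_nonneg (x - y)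
  obtain rfl : b = 1 - a := by linarith
  simp only [mulVec_add, mulVec_smul, mulVec_sub, dotProduct_add, add_dotProduct, dotProduct_smul,
    smul_dotProduct, dotProduct_sub, sub_dotProduct, smul_eq_mul] at hxy ⊢
  nlinarith [mul_nonneg (mul_nonneg ha hb) hxy]

theorem Matrix.PosSemidef.convexOn_dotProduct_mulVec_add {ι : Type*} [Fintype ι]
    {P : Matrix ι ι ℝ} (hP : P.PosSemidef) (w : ι → ℝ) :
    ConvexOn ℝ Set.univ fun x => (x + w) ⬝ᵥ P *ᵥ (x + w) := by
  simpa only [Set.preimage_univ, Function.comp_def, add_comm w] using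
    hP.convexOn_dotProduct_mulVec.translate_right w

theorem EuclideanSpace.dist_sq_eq_dotProduct {n : ℕ} (ξ ζ : EuclideanSpace ℝ (Fin n)) :
    dist ξ ζ ^ 2 = (toVec ξ - toVec ζ) ⬝ᵥ (toVec ξ - toVec ζ) := by
  rw [dist_eq_norm, ← real_inner_self_eq_norm_sq, EuclideanSpace.inner_eq_star_dotProduct]
  simp [toVec]

section homMat

variable {n : ℕ}

theorem isHermitian_homMat {A : Matrix (Fin n) (Fin n) ℝ} (hA : A.IsHermitian) (b : Fin n → ℝ)
    (c : ℝ) : (homMat A b c).IsHermitian :=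
  hA.fromBlocks (by simp) (by ext; simp)

theorem homMat_add (A A' : Matrix (Fin n) (Fin n) ℝ) (b b' : Fin n → ℝ) (c c' : ℝ) :
    homMat A b c + homMat A' b' c' = homMat (A + A') (b + b') (c + c') := by
  simp only [homMat, fromBlocks_add, replicateCol_add, replicateRow_add]
  congr 1

theorem homMat_smul (π : ℝ) (A : Matrix (Fin n) (Fin n) ℝ) (b : Fin n → ℝ) (c : ℝ) :
    π • homMat A b c = homMat (π • A) (π • b) (π * c) := by
  simp only [homMat, fromBlocks_smul, replicateCol_smul, replicateRow_smul]
  congr 1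

theorem dotProduct_homMat_mulVec (A : Matrix (Fin n) (Fin n) ℝ) (b : Fin n → ℝ) (c : ℝ)
    (x : Fin n → ℝ) (t : ℝ) :
    Sum.elim x (fun _ => t) ⬝ᵥ homMat A b c *ᵥ Sum.elim x (fun _ => t)
      = x ⬝ᵥ A *ᵥ x + 2 * t * (b ⬝ᵥ x) + c * t ^ 2 := by
  have hcol : replicateCol (Fin 1) b *ᵥ (fun _ => t) = t • b := by
    ext; simp [mulVec, dotProduct, replicateCol, mul_comm]
  have hconst : (of fun _ _ => c : Matrix (Fin 1) (Fin 1) ℝ) *ᵥ (fun _ => t) = fun _ => c * t := by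
    ext; simp [mulVec, dotProduct]
  rw [homMat, fromBlocks_mulVec, dotProduct_block]
  simp only [Sum.elim_comp_inl, Sum.elim_comp_inr, replicateRow_mulVec_eq_const, hcol, hconst]
  have hone : ∀ v : Fin 1 → ℝ, (fun _ => t) ⬝ᵥ v = t * v 0 := fun v => by simp [dotProduct]
  simp only [dotProduct_add, dotProduct_smul, dotProduct_comm x b, hone, smul_eq_mul,
    Pi.add_apply, Function.const_apply]
  ring

theorem posSemidef_homMat_iff {A : Matrix (Fin n) (Fin n) ℝ} (hA : A.IsHermitian)
    (b : Fin n → ℝ) (c : ℝ) :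
    (homMat A b c).PosSemidef ↔ A.PosSemidef ∧ ∀ x, 0 ≤ x ⬝ᵥ A *ᵥ x + 2 * (b ⬝ᵥ x) + c := by
  simp only [posSemidef_iff_dotProduct_mulVec, star_trivial]
  constructor
  · rintro ⟨-, h⟩
    refine ⟨⟨hA, fun x => ?_⟩, fun x => ?_⟩
    · simpa [dotProduct_homMat_mulVec] using h (Sum.elim x fun _ => 0)
    · simpa [dotProduct_homMat_mulVec] using h (Sum.elim x fun _ => 1)
  · rintro ⟨⟨-, hA₀⟩, h⟩
    refine ⟨isHermitian_homMat hA b c, fun v => ?_⟩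
    obtain ⟨x, t, rfl⟩ : ∃ x t, v = Sum.elim x fun _ => t :=
      ⟨v ∘ Sum.inl, v (Sum.inr 0), by ext (i | i); exacts [rfl, by simp [Subsingleton.elim i 0]]⟩
    rw [dotProduct_homMat_mulVec]
    rcases eq_or_ne t 0 with rfl | ht
    · simpa using hA₀ x
    -- dehomogenize at `x / t`
    calc 0 ≤ t ^ 2 * ((t⁻¹ • x) ⬝ᵥ A *ᵥ (t⁻¹ • x) + 2 * (b ⬝ᵥ (t⁻¹ • x)) + c) :=
          mul_nonneg (sq_nonneg t) (h _)
      _ = x ⬝ᵥ A *ᵥ x + 2 * t * (b ⬝ᵥ x) + c * t ^ 2 := by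
          simp only [mulVec_smul, dotProduct_smul, smul_dotProduct, smul_eq_mul]
          field_simp

end homMat

theorem posSemidef_two_by_two_iff {p u : ℝ} : (!![p, u; u, 1]).PosSemidef ↔ u ^ 2 ≤ p := by
  have hquad : ∀ v : Fin 2 → ℝ,
      v ⬝ᵥ !![p, u; u, 1] *ᵥ v = (u * v 0 + v 1) ^ 2 + (p - u ^ 2) * v 0 ^ 2 := by
    intro v
    simp [dotProduct, mulVec, Fin.sum_univ_two]
    ring
  simp only [posSemidef_iff_dotProduct_mulVec, star_trivial, hquad]
  constructor
  · intro h
    simpa using h.2 ![1, -u]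
  · intro h
    refine ⟨?_, fun v => add_nonneg (sq_nonneg _) (mul_nonneg (sub_nonneg.2 h) (sq_nonneg _))⟩
    ext i j
    fin_cases i <;> fin_cases j <;> rfl

theorem posSemidef_homMat_add_smul_iff {n : ℕ} {P : Matrix (Fin n) (Fin n) ℝ} (hP : P.PosSemidef)
    (ξ w : Fin n → ℝ) {π : ℝ} (hπ : 0 ≤ π) (p : ℝ) :
    (homMat 1 (-ξ) (ξ ⬝ᵥ ξ - p) + π • homMat P (P *ᵥ w) (w ⬝ᵥ P *ᵥ w - 1)).PosSemidef ↔
      ∀ x, p ≤ (x - ξ) ⬝ᵥ (x - ξ) + π * ((x + w) ⬝ᵥ P *ᵥ (x + w) - 1) := by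
  have hA : (1 + π • P).PosSemidef := PosSemidef.one.add (hP.smul hπ)
  rw [homMat_smul, homMat_add, posSemidef_homMat_iff hA.1, and_iff_right hA]
  refine forall_congr' fun x => ?_
  have hsymm : w ⬝ᵥ P *ᵥ x = x ⬝ᵥ P *ᵥ w := by
    simpa [(isHermitian_iff_isSymm.1 hP.1).eq] using dotProduct_transpose_mulVec P w x
  have key : x ⬝ᵥ (1 + π • P) *ᵥ x + 2 * ((-ξ + π • P *ᵥ w) ⬝ᵥ x)
        + (ξ ⬝ᵥ ξ - p + π * (w ⬝ᵥ P *ᵥ w - 1))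
      = (x - ξ) ⬝ᵥ (x - ξ) + π * ((x + w) ⬝ᵥ P *ᵥ (x + w) - 1) - p := by
    simp only [add_mulVec, one_mulVec, smul_mulVec, mulVec_add, dotProduct_add, add_dotProduct,
      dotProduct_sub, sub_dotProduct, dotProduct_smul, smul_dotProduct, neg_dotProduct,
      smul_eq_mul, hsymm, dotProduct_comm ξ x, dotProduct_comm (P *ᵥ w) x]
    ring
  rw [key, sub_nonneg]

/-- Lemma 2 of the paper: the minimum Euclidean distance from `ξ̂` to the ellipsoidal set
`S = {ξ : (ξ + V f̄)ᵀ P̄ (ξ + V f̄) ≤ 1}` is the optimal value of the SDP (14), and this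
optimal value is attained. -/
theorem infDist_isGreatest_SDP {n m : ℕ}
    (P : Matrix (Fin n) (Fin n) ℝ) (hP : P.PosSemidef)
    (V : Matrix (Fin n) (Fin m) ℝ) (f : Fin m → ℝ) (ξhat : EuclideanSpace ℝ (Fin n)) :
    IsGreatest
      { u : ℝ | ∃ π p : ℝ, 0 ≤ π ∧
        (homMat (1 : Matrix (Fin n) (Fin n) ℝ) (-(toVec ξhat))
            (toVec ξhat ⬝ᵥ toVec ξhat - p)
          + π • homMat P (P.mulVec (V.mulVec f))
              ((V.mulVec f) ⬝ᵥ P.mulVec (V.mulVec f) - 1)).PosSemidef ∧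
        (!![p, u; u, 1]).PosSemidef }
      (infDist ξhat { ξ : EuclideanSpace ℝ (Fin n) |
        (toVec ξ + V.mulVec f) ⬝ᵥ P.mulVec (toVec ξ + V.mulVec f) ≤ 1 }) := by
  set w := V *ᵥ f
  set S := { ξ : EuclideanSpace ℝ (Fin n) | (toVec ξ + w) ⬝ᵥ P *ᵥ (toVec ξ + w) ≤ 1 }
  have hS : S.Nonempty := ⟨WithLp.toLp 2 (-w), by simp [S, toVec]⟩
  have hdist : ∀ ξ, dist ξhat ξ ^ 2 = (toVec ξ - toVec ξhat) ⬝ᵥ (toVec ξ - toVec ξhat) :=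
    fun ξ => by rw [dist_comm, EuclideanSpace.dist_sq_eq_dotProduct]
  constructor
  · obtain ⟨π, hπ, hL⟩ := ConvexOn.exists_lagrange_multiplier
      (f := fun x => (x - toVec ξhat) ⬝ᵥ (x - toVec ξhat))
      (g := fun x => (x + w) ⬝ᵥ P *ᵥ (x + w) - 1) (c := infDist ξhat S ^ 2)
      (by simpa [sub_eq_add_neg] using PosSemidef.one.convexOn_dotProduct_mulVec_add (-toVec ξhat))
      ((hP.convexOn_dotProduct_mulVec_add w).sub (concaveOn_const 1 convex_univ))
      (Set.mem_univ (-w)) (by simp)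
      fun x _ hx => (pow_le_pow_left₀ infDist_nonneg
        (infDist_le_dist_of_mem (show WithLp.toLp 2 x ∈ S from sub_nonpos.1 hx)) 2).trans_eq
        (hdist _)
    exact ⟨π, _, hπ, (posSemidef_homMat_add_smul_iff hP _ w hπ _).2 fun x => hL x trivial,
      posSemidef_two_by_two_iff.2 le_rfl⟩
  · rintro u ⟨π, p, hπ, hM, hpu⟩
    rw [posSemidef_homMat_add_smul_iff hP _ w hπ] at hM
    rw [posSemidef_two_by_two_iff] at hpu
    refine (le_infDist hS).2 fun ξ hξ => le_of_sq_le_sq ?_ dist_nonneg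
    nlinarith [hdist ξ, hM (toVec ξ), mul_nonneg hπ (sub_nonneg.2 hξ)]
end

section
/- Let P̄ be an n×n real positive semidefinite matrix, V an n×m real matrix, f̄ ∈ ℝ^m, and ξ̂ ∈ ℝ^n. Suppose π ≥ 0 and p, u ∈ ℝ are such that (i) the (n+1)×(n+1) block matrix [[I, −ξ̂],[−ξ̂ᵀ, ξ̂ᵀξ̂ − p]] + π·[[P̄, P̄Vf̄],[f̄ᵀVᵀP̄, f̄ᵀVᵀP̄Vf̄ − 1]] is positive semidefinite and (ii) the 2×2 matrix [[p, u],[u, 1]] is positive semidefinite. Then for every ξ ∈ ℝ^n with (ξ+Vf̄)ᵀ P̄ (ξ+Vf̄) ≤ 1, one has u ≤ ‖ξ − ξ̂‖. -/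
open Matrix Metric

/-!
Evaluating both homogenized matrices of the feasibility condition at `(ξ, 1)` turns it into
`‖ξ - ξ̂‖² - p + π ((ξ + V f̄)ᵀ P̄ (ξ + V f̄) - 1) ≥ 0`. On the ellipsoid the `π`-term is
nonpositive, so `‖ξ - ξ̂‖² ≥ p`, while positivity of `[[p, u], [u, 1]]` gives `u² ≤ p`.
-/

lemma Matrix.PosSemidef.dotProduct_mulVec_nonneg_of_add_smul {ι : Type*} [Fintype ι]
    {M₀ M₁ : Matrix ι ι ℝ} {π : ℝ} (h : (M₀ + π • M₁).PosSemidef) (hπ : 0 ≤ π) {z : ι → ℝ}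
    (hz : z ⬝ᵥ M₁ *ᵥ z ≤ 0) : 0 ≤ z ⬝ᵥ M₀ *ᵥ z := by
  have h' := h.dotProduct_mulVec_nonneg z
  rw [star_trivial, add_mulVec, smul_mulVec, dotProduct_add, dotProduct_smul, smul_eq_mul] at h'
  nlinarith [mul_nonpos_of_nonneg_of_nonpos hπ hz]

lemma sq_le_mul_of_posSemidef_fin_two {a b c : ℝ} (h : !![a, b; b, c].PosSemidef) :
    b ^ 2 ≤ a * c := by
  have hdet := h.det_nonneg
  rw [det_fin_two_of] at hdet
  nlinarith

lemma Matrix.IsSymm.dotProduct_mulVec_add_add {ι : Type*} [Fintype ι] {A : Matrix ι ι ℝ}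
    (hA : A.IsSymm) (x y : ι → ℝ) :
    (x + y) ⬝ᵥ A *ᵥ (x + y) = x ⬝ᵥ A *ᵥ x + 2 * (x ⬝ᵥ A *ᵥ y) + y ⬝ᵥ A *ᵥ y := by
  have hyx : y ⬝ᵥ A *ᵥ x = x ⬝ᵥ A *ᵥ y := by rw [← dotProduct_transpose_mulVec, hA.eq]
  rw [mulVec_add, dotProduct_add, add_dotProduct, add_dotProduct, hyx]
  ring

lemma EuclideanSpace.norm_sub_sq_eq_dotProduct {ι : Type*} [Fintype ι]
    (x y : EuclideanSpace ℝ ι) : ‖x - y‖ ^ 2 = (x - y : ι → ℝ) ⬝ᵥ (x - y : ι → ℝ) := by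
  rw [← real_inner_self_eq_norm_sq, EuclideanSpace.inner_eq_star_dotProduct, star_trivial]
  rfl

lemma homMat_dotProduct_mulVec_sumElim_one {n : ℕ} (A : Matrix (Fin n) (Fin n) ℝ)
    (b : Fin n → ℝ) (c : ℝ) (x : Fin n → ℝ) :
    Sum.elim x 1 ⬝ᵥ homMat A b c *ᵥ Sum.elim x 1 = x ⬝ᵥ A *ᵥ x + 2 * (x ⬝ᵥ b) + c := by
  have hcol : replicateCol (Fin 1) b *ᵥ 1 = b := by ext i; simp [mulVec, dotProduct]
  have hrow : (1 : Fin 1 → ℝ) ⬝ᵥ replicateRow (Fin 1) b *ᵥ x = x ⬝ᵥ b := by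
    simp [mulVec, dotProduct, mul_comm]
  have hcorner : (1 : Fin 1 → ℝ) ⬝ᵥ (of fun _ _ => c : Matrix (Fin 1) (Fin 1) ℝ) *ᵥ 1 = c := by
    simp [mulVec, dotProduct]
  simp only [homMat, fromBlocks_mulVec, sumElim_dotProduct_sumElim, dotProduct_add,
    Sum.elim_comp_inl, Sum.elim_comp_inr, hcol, hrow, hcorner]
  ring

lemma homMat_dist_dotProduct_mulVec_sumElim_one {n : ℕ} (x y : Fin n → ℝ) (p : ℝ) :
    Sum.elim x 1 ⬝ᵥ homMat 1 (-y) (y ⬝ᵥ y - p) *ᵥ Sum.elim x 1 = (x - y) ⬝ᵥ (x - y) - p := by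
  rw [homMat_dotProduct_mulVec_sumElim_one, one_mulVec, dotProduct_neg]
  simp only [sub_dotProduct, dotProduct_sub, dotProduct_comm y x]
  ring

/-- Weak-duality direction of Lemma 2 of the paper: any feasible point `(π, p, u)` of the
SDP (14) gives a lower bound `u ≤ ‖ξ - ξ̂‖` for every `ξ` in the ellipsoidal set
`{ξ : (ξ + V f̄)ᵀ P̄ (ξ + V f̄) ≤ 1}`. -/
theorem sdp_feasible_lower_bound {n m : ℕ}
    (P : Matrix (Fin n) (Fin n) ℝ) (hP : P.PosSemidef)
    (V : Matrix (Fin n) (Fin m) ℝ) (f : Fin m → ℝ) (ξhat : EuclideanSpace ℝ (Fin n))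
    (π p u : ℝ) (hπ : 0 ≤ π)
    (h1 : (homMat (1 : Matrix (Fin n) (Fin n) ℝ) (-(toVec ξhat))
            (toVec ξhat ⬝ᵥ toVec ξhat - p)
          + π • homMat P (P.mulVec (V.mulVec f))
              ((V.mulVec f) ⬝ᵥ P.mulVec (V.mulVec f) - 1)).PosSemidef)
    (h2 : (!![p, u; u, 1]).PosSemidef) :
    ∀ ξ : EuclideanSpace ℝ (Fin n),
      (toVec ξ + V.mulVec f) ⬝ᵥ P.mulVec (toVec ξ + V.mulVec f) ≤ 1 →
        u ≤ ‖ξ - ξhat‖ := by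
  intro ξ hξ
  have hPsymm : P.IsSymm := isHermitian_iff_isSymm.mp hP.isHermitian
  have hp : p ≤ ‖ξ - ξhat‖ ^ 2 := by
    have hquad := h1.dotProduct_mulVec_nonneg_of_add_smul hπ (z := Sum.elim (toVec ξ) 1) <| by
      rw [homMat_dotProduct_mulVec_sumElim_one]
      linarith [hPsymm.dotProduct_mulVec_add_add (toVec ξ) (V *ᵥ f)]
    rw [homMat_dist_dotProduct_mulVec_sumElim_one] at hquad
    rw [EuclideanSpace.norm_sub_sq_eq_dotProduct]
    exact sub_nonneg.mp hquad
  have hu : u ^ 2 ≤ p := by simpa using sq_le_mul_of_posSemidef_fin_two h2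
  exact (abs_le_of_sq_le_sq' (hu.trans hp) (norm_nonneg _)).2
end

section
/- Let A, B be symmetric n×n real matrices, a, b ∈ ℝ^n, and c, d ∈ ℝ, and define the quadratic functions f(x) = xᵀAx + 2aᵀx + c and g(x) = xᵀBx + 2bᵀx + d on ℝ^n. Assume there exists x₀ ∈ ℝ^n with g(x₀) < 0 (Slater condition). Then the implication 'for all x ∈ ℝ^n, g(x) ≤ 0 implies f(x) ≥ 0' holds if and only if there exists π ≥ 0 such that the (n+1)×(n+1) block matrix [[A + πB, a + πb],[(a + πb)ᵀ, c + πd]] is positive semidefinite. -/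
/-!
For quadratic forms `P`, `Q` with `Q` taking a negative value and `P ≥ 0` wherever `Q ≤ 0`, the
multiplier `π = inf {P v / -Q v | Q v < 0}` makes `P + π Q` nonnegative: on a pair `u`, `v` with
`Q u > 0 > Q v`, the line `u + t v` meets the cone `Q = 0` at parameters `t₁ < 0 < t₂`, and the
inequalities `P (u + tᵢ v) ≥ 0` combine to `-P u / Q u ≤ P v / -Q v`. The inhomogeneous statement
reduces to this one by homogenizing `x ↦ (x, 1)`; the points of the hyperplane `s = 0` are limits
of points `(x, s)` with `s ≠ 0` along a Slater direction.
-/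

open Matrix

open Filter Topology

lemma exists_roots_of_neg_of_pos {a c : ℝ} (ha : a < 0) (hc : 0 < c) (b : ℝ) :
    ∃ t₁ t₂ : ℝ, t₁ < 0 ∧ 0 < t₂ ∧ a * (t₁ * t₂) = c ∧
      a * t₁ ^ 2 + b * t₁ + c = 0 ∧ a * t₂ ^ 2 + b * t₂ + c = 0 := by
  have ha₀ : a ≠ 0 := ha.ne
  set s := √(b ^ 2 - 4 * a * c)
  have hs : s ^ 2 = b ^ 2 - 4 * a * c := Real.sq_sqrt (by nlinarith)
  obtain ⟨hbs, hbs'⟩ := abs_lt_of_sq_lt_sq' (show b ^ 2 < s ^ 2 by nlinarith) (Real.sqrt_nonneg _)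
  refine ⟨(-b + s) / (2 * a), (-b - s) / (2 * a), div_neg_of_pos_of_neg (by linarith) (by linarith),
    div_pos_of_neg_of_neg (by linarith) (by linarith), ?_, ?_, ?_⟩
  · field_simp
    linear_combination -hs
  all_goals
    field_simp
    linear_combination hs

namespace QuadraticMap

variable {V : Type*} [AddCommGroup V] [Module ℝ V] {P Q : QuadraticMap ℝ V ℝ}

lemma map_add_smul (Q : QuadraticMap ℝ V ℝ) (u v : V) (t : ℝ) :
    Q (u + t • v) = Q u + t * polar Q u v + t ^ 2 * Q v := by
  rw [QuadraticMap.map_add Q, QuadraticMap.map_smul, polar_smul_right, smul_eq_mul, smul_eq_mul]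
  ring

lemma neg_div_le_div_neg (hPQ : ∀ z, Q z = 0 → 0 ≤ P z) {u v : V} (hu : 0 < Q u)
    (hv : Q v < 0) : -P u / Q u ≤ P v / -Q v := by
  obtain ⟨t₁, t₂, ht₁, ht₂, hprod, hroot₁, hroot₂⟩ :=
    exists_roots_of_neg_of_pos hv hu (polar Q u v)
  have hP : ∀ t, Q v * t ^ 2 + polar Q u v * t + Q u = 0 →
      0 ≤ P u + t * polar P u v + t ^ 2 * P v := by
    intro t ht
    rw [← map_add_smul]
    exact hPQ _ (by rw [map_add_smul]; linear_combination ht)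
  -- weighting the two inequalities by `t₂` and `-t₁` eliminates the polar term
  have hmul : 0 ≤ (t₂ - t₁) * (P u - t₁ * t₂ * P v) := by
    linarith [mul_nonneg ht₂.le (hP t₁ hroot₁), mul_nonneg (neg_nonneg.mpr ht₁.le) (hP t₂ hroot₂)]
  have hvieta : 0 ≤ P u - t₁ * t₂ * P v := nonneg_of_mul_nonneg_right hmul (by linarith)
  rw [div_le_div_iff₀ hu (by linarith)]
  linear_combination mul_nonneg hvieta (neg_nonneg.mpr hv.le) + P v * hprod

theorem exists_nonneg_forall_nonneg_add_mul (hPQ : ∀ z, Q z ≤ 0 → 0 ≤ P z)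
    (hQ : ∃ z, Q z < 0) : ∃ π : ℝ, 0 ≤ π ∧ ∀ z, 0 ≤ P z + π * Q z := by
  set S := (fun v => P v / -Q v) '' {v | Q v < 0}
  have hS : S.Nonempty := Set.Nonempty.image _ hQ
  have hS₀ : ∀ r ∈ S, 0 ≤ r := by
    rintro _ ⟨v, hv, rfl⟩
    exact div_nonneg (hPQ v hv.le) (neg_nonneg.mpr hv.le)
  refine ⟨sInf S, le_csInf hS hS₀, fun z => ?_⟩
  rcases lt_trichotomy (Q z) 0 with hz | hz | hz
  · have hle := csInf_le ⟨0, hS₀⟩ (Set.mem_image_of_mem _ (show z ∈ {v | Q v < 0} from hz))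
    rw [le_div_iff₀ (neg_pos.mpr hz)] at hle
    linarith
  · rw [hz, mul_zero, add_zero]
    exact hPQ z hz.le
  · have hle : -P z / Q z ≤ sInf S := le_csInf hS <| by
      rintro _ ⟨v, hv, rfl⟩
      exact neg_div_le_div_neg (fun z hz => hPQ z hz.le) hz hv
    rw [div_le_iff₀ hz] at hle
    linarith

lemma exists_forall_map_add_smul_neg {w z : V} (hw : Q w < 0) (hz : Q z ≤ 0) :
    ∃ w', (w' = w ∨ w' = -w) ∧ ∀ ε : ℝ, 0 < ε → Q (z + ε • w') < 0 := by
  have hneg : ∀ w', Q w' < 0 → polar Q z w' ≤ 0 → ∀ ε : ℝ, 0 < ε → Q (z + ε • w') < 0 := by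
    intro w' hw' hpol ε hε
    rw [map_add_smul]
    nlinarith [mul_pos (pow_pos hε 2) (neg_pos.mpr hw')]
  rcases le_total (polar Q z w) 0 with hpol | hpol
  · exact ⟨w, .inl rfl, hneg w hw hpol⟩
  · refine ⟨-w, .inr rfl, hneg (-w) (by rwa [QuadraticMap.map_neg]) ?_⟩
    rw [polar_neg_right]
    exact neg_nonpos.mpr hpol

lemma nonneg_of_forall_pos_nonneg_map_add_smul {z w : V}
    (h : ∀ ε : ℝ, 0 < ε → 0 ≤ P (z + ε • w)) : 0 ≤ P z := by
  have hcont : Continuous fun ε : ℝ => P z + ε * polar P z w + ε ^ 2 * P w := by fun_prop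
  have hlim : Tendsto (fun ε : ℝ => P (z + ε • w)) (𝓝[>] 0) (𝓝 (P z)) := by
    simp_rw [map_add_smul]
    simpa using hcont.continuousWithinAt.tendsto (x := 0) (s := Set.Ioi 0)
  exact ge_of_tendsto hlim (eventually_nhdsWithin_of_forall fun ε hε => h ε hε)

end QuadraticMap

lemma Matrix.toQuadraticForm'_apply {R m : Type*} [CommRing R] [Fintype m] [DecidableEq m]
    (M : Matrix m m R) (x : m → R) : M.toQuadraticForm' x = x ⬝ᵥ M *ᵥ x := by
  simp [Matrix.toQuadraticForm', Matrix.toLinearMap₂'_apply']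

section homMat

variable {n : ℕ}

lemma toQuadraticForm'_homMat_sumElim_one (A : Matrix (Fin n) (Fin n) ℝ) (a : Fin n → ℝ) (c : ℝ)
    (x : Fin n → ℝ) :
    (homMat A a c).toQuadraticForm' (Sum.elim x 1) = x ⬝ᵥ A *ᵥ x + 2 * (a ⬝ᵥ x) + c := by
  rw [toQuadraticForm'_apply, homMat, fromBlocks_mulVec, Sum.elim_comp_inl, Sum.elim_comp_inr,
    sumElim_dotProduct_sumElim, replicateRow_mulVec_eq_const]
  have hcol : replicateCol (Fin 1) a *ᵥ 1 = a := by ext; simp [mulVec, dotProduct, replicateCol]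
  have hrow : (1 : Fin 1 → ℝ) ⬝ᵥ Function.const (Fin 1) (a ⬝ᵥ x) = a ⬝ᵥ x := by simp [dotProduct]
  have hcorner : (1 : Fin 1 → ℝ) ⬝ᵥ (of fun _ _ => c : Matrix (Fin 1) (Fin 1) ℝ) *ᵥ 1 = c := by
    simp [dotProduct, mulVec]
  rw [hcol, dotProduct_add, dotProduct_add, hrow, hcorner, dotProduct_comm x a]
  ring

lemma eq_smul_sumElim_one (z : Fin n ⊕ Fin 1 → ℝ) (hz : z (Sum.inr 0) ≠ 0) :
    z = z (Sum.inr 0) • Sum.elim ((z (Sum.inr 0))⁻¹ • (z ∘ Sum.inl)) 1 := by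
  ext (i | i)
  · simp [hz]
  · simp [Fin.fin_one_eq_zero i]

lemma homMat_isSymm {A : Matrix (Fin n) (Fin n) ℝ} (hA : A.IsSymm) (a : Fin n → ℝ) (c : ℝ) :
    (homMat A a c).IsSymm := by
  rw [IsSymm, homMat, fromBlocks_transpose, transpose_replicateCol, transpose_replicateRow, hA.eq]
  rfl

lemma homMat_add_smul (A B : Matrix (Fin n) (Fin n) ℝ) (a b : Fin n → ℝ) (c d π : ℝ) :
    homMat (A + π • B) (a + π • b) (c + π * d) = homMat A a c + π • homMat B b d := by
  ext (i | i) (j | j) <;> simp [homMat, replicateCol, replicateRow]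

lemma toQuadraticForm'_homMat_add_smul (A B : Matrix (Fin n) (Fin n) ℝ) (a b : Fin n → ℝ)
    (c d π : ℝ) (z : Fin n ⊕ Fin 1 → ℝ) :
    (homMat (A + π • B) (a + π • b) (c + π * d)).toQuadraticForm' z =
      (homMat A a c).toQuadraticForm' z + π * (homMat B b d).toQuadraticForm' z := by
  simp only [toQuadraticForm'_apply, homMat_add_smul, add_mulVec, smul_mulVec, dotProduct_add,
    dotProduct_smul, smul_eq_mul]

variable {A B : Matrix (Fin n) (Fin n) ℝ} {a b : Fin n → ℝ} {c d : ℝ}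

lemma toQuadraticForm'_homMat_nonneg_of_nonpos_of_ne_zero
    (hfg : ∀ x : Fin n → ℝ, x ⬝ᵥ B *ᵥ x + 2 * (b ⬝ᵥ x) + d ≤ 0 →
      0 ≤ x ⬝ᵥ A *ᵥ x + 2 * (a ⬝ᵥ x) + c)
    {z : Fin n ⊕ Fin 1 → ℝ} (hz : z (Sum.inr 0) ≠ 0)
    (hQ : (homMat B b d).toQuadraticForm' z ≤ 0) :
    0 ≤ (homMat A a c).toQuadraticForm' z := by
  rw [eq_smul_sumElim_one z hz, QuadraticMap.map_smul, smul_eq_mul,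
    toQuadraticForm'_homMat_sumElim_one] at hQ ⊢
  exact mul_nonneg (mul_self_nonneg _)
    (hfg _ (nonpos_of_mul_nonpos_right hQ (mul_self_pos.mpr hz)))

lemma toQuadraticForm'_homMat_nonneg_of_nonpos
    (hfg : ∀ x : Fin n → ℝ, x ⬝ᵥ B *ᵥ x + 2 * (b ⬝ᵥ x) + d ≤ 0 →
      0 ≤ x ⬝ᵥ A *ᵥ x + 2 * (a ⬝ᵥ x) + c)
    {x₀ : Fin n → ℝ} (hx₀ : x₀ ⬝ᵥ B *ᵥ x₀ + 2 * (b ⬝ᵥ x₀) + d < 0)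
    (z : Fin n ⊕ Fin 1 → ℝ) (hQ : (homMat B b d).toQuadraticForm' z ≤ 0) :
    0 ≤ (homMat A a c).toQuadraticForm' z := by
  by_cases hz : z (Sum.inr 0) = 0
  · have hw : (homMat B b d).toQuadraticForm' (Sum.elim x₀ 1) < 0 := by
      rwa [toQuadraticForm'_homMat_sumElim_one]
    obtain ⟨w, hw, hneg⟩ := QuadraticMap.exists_forall_map_add_smul_neg hw hQ
    have hw₀ : w (Sum.inr 0) ≠ 0 := by rcases hw with rfl | rfl <;> simp
    refine QuadraticMap.nonneg_of_forall_pos_nonneg_map_add_smul (w := w) fun ε hε => ?_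
    exact toQuadraticForm'_homMat_nonneg_of_nonpos_of_ne_zero hfg (by simp [hz, hε.ne', hw₀])
      (hneg ε hε).le
  · exact toQuadraticForm'_homMat_nonneg_of_nonpos_of_ne_zero hfg hz hQ

end homMat

/-- The S-procedure (S-lemma) for a single quadratic constraint in matrix form, under the
Slater condition: `(∀ x, g(x) ≤ 0 → f(x) ≥ 0)` iff there exists a multiplier `π ≥ 0` with
`[[A + πB, a + πb],[(a + πb)ᵀ, c + πd]] ⪰ 0`, where `f(x) = xᵀAx + 2aᵀx + c` and
`g(x) = xᵀBx + 2bᵀx + d`. -/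
theorem s_lemma {n : ℕ}
    (A B : Matrix (Fin n) (Fin n) ℝ) (hA : A.IsSymm) (hB : B.IsSymm)
    (a b : Fin n → ℝ) (c d : ℝ)
    (hSlater : ∃ x₀ : Fin n → ℝ, x₀ ⬝ᵥ B.mulVec x₀ + 2 * (b ⬝ᵥ x₀) + d < 0) :
    (∀ x : Fin n → ℝ, x ⬝ᵥ B.mulVec x + 2 * (b ⬝ᵥ x) + d ≤ 0 →
        0 ≤ x ⬝ᵥ A.mulVec x + 2 * (a ⬝ᵥ x) + c) ↔
      ∃ π : ℝ, 0 ≤ π ∧ (homMat (A + π • B) (a + π • b) (c + π * d)).PosSemidef := by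
  obtain ⟨x₀, hx₀⟩ := hSlater
  constructor
  · intro hfg
    have hQ : (homMat B b d).toQuadraticForm' (Sum.elim x₀ 1) < 0 := by
      rwa [toQuadraticForm'_homMat_sumElim_one]
    obtain ⟨π, hπ, hnonneg⟩ := QuadraticMap.exists_nonneg_forall_nonneg_add_mul
      (toQuadraticForm'_homMat_nonneg_of_nonpos hfg hx₀) ⟨_, hQ⟩
    refine ⟨π, hπ, .of_dotProduct_mulVec_nonneg ?_ fun z => ?_⟩
    · exact isHermitian_iff_isSymm.mpr (homMat_isSymm (hA.add (hB.smul π)) _ _)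
    · rw [star_trivial, ← toQuadraticForm'_apply, toQuadraticForm'_homMat_add_smul]
      exact hnonneg z
  · rintro ⟨π, hπ, hpsd⟩ x hg
    have h := hpsd.dotProduct_mulVec_nonneg (Sum.elim x 1)
    rw [star_trivial, ← toQuadraticForm'_apply, toQuadraticForm'_homMat_add_smul,
      toQuadraticForm'_homMat_sumElim_one, toQuadraticForm'_homMat_sumElim_one] at h
    linarith [mul_nonpos_of_nonneg_of_nonpos hπ hg]
end
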